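/- Let γ > 0 and 0 < c < 2/3. Let 1 ≥ x_1 > x_2 > ... > x_k > 0 be a k-portfolio that satisfies the FOC recurrence x_{i+1} = 2x_i - x_{i-1} + γ(2x_i - 3x_i²) for 1 ≤ i ≤ k (with x_0 = 1, x_{k+1} = 0) and with the property that removing any single school does not increase U_γ. Then the number of indices i with x_i > c is at most m(γ,c), where m(γ,c) = 2 + 1/(3γ) + (2/3 - c)/√(γ c²(1-c)) if 0 < γ < 1/3, and m(γ,c) = 2 + (2/3 - c)/√(γ c²(1-c)) if γ ≥ 1/3. -/

import Mathlib

/-!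
Dropping school `i` changes `U_γ` by `γ x_i² (1 - x_i) - (x_{i-1} - x_i)(x_i - x_{i+1})`, so
when no single drop helps, the gaps `d_i = x_i - x_{i+1}` satisfy
`γ x_i² (1 - x_i) ≤ d_{i-1} d_i`. The FOC reads `d_i = d_{i-1} + γ x_i (3 x_i - 2)`: gaps grow
while `x_i > 2/3` and shrink below. Above `2/3` every gap is at least `d_1 ≥ γ x_1²`, and these
gaps add up to less than `x_1 - 2/3 ≤ x_1² / 3`, so there are fewer than `1/(3γ)` of them.
In `(c, 2/3]` the shrinking gaps satisfy `d_i² ≥ d_i d_{i+1} ≥ γ c² (1 - c)`, since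
`t² (1 - t)` increases on `[0, 2/3]`, and they add up to less than `2/3 - c`.
-/

open Finset

/-- Perceived expected utility of the k-portfolio `x 1 > x 2 > ⋯ > x k`
(with the convention `x 0 = 1`). -/
noncomputable def U (γ : ℝ) (k : ℕ) (x : ℕ → ℝ) : ℝ :=
  ∑ i ∈ Finset.Icc 1 k, (-γ * (1 - x i) * (x i) ^ 2 + x i * (x (i - 1) - x i))

/-- The (k-1)-portfolio obtained from `x` by dropping the i-th school. -/
def dropAt (x : ℕ → ℝ) (i : ℕ) : ℕ → ℝ :=
  fun j => if j < i then x j else x (j + 1)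

/-- The bound `m(γ,c)` on the number of schools above `c` in an optimal portfolio. -/
noncomputable def mBound (γ c : ℝ) : ℝ :=
  if γ < 1 / 3 then 2 + 1 / (3 * γ) + (2 / 3 - c) / Real.sqrt (γ * c ^ 2 * (1 - c))
  else 2 + (2 / 3 - c) / Real.sqrt (γ * c ^ 2 * (1 - c))

lemma U_succ (γ : ℝ) (k : ℕ) (x : ℕ → ℝ) :
    U γ (k + 1) x =
      U γ k x + (-γ * (1 - x (k + 1)) * x (k + 1) ^ 2 + x (k + 1) * (x k - x (k + 1))) := by
  rw [U, sum_Icc_succ_top (by omega), Nat.add_sub_cancel]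
  rfl

lemma U_dropAt_of_lt (γ : ℝ) (x : ℕ → ℝ) {i k : ℕ} (hki : k < i) :
    U γ k (dropAt x i) = U γ k x := by
  refine sum_congr rfl fun j hj => ?_
  have hj := (mem_Icc.mp hj).2
  simp only [dropAt, if_pos (by omega : j < i), if_pos (by omega : j - 1 < i)]

lemma U_add_two_sub_U_dropAt (γ : ℝ) (x : ℕ → ℝ) (a s : ℕ) :
    U γ (a + 2 + s) x - U γ (a + 1 + s) (dropAt x (a + 1)) =
      (x a - x (a + 1)) * (x (a + 1) - x (a + 2)) - γ * x (a + 1) ^ 2 * (1 - x (a + 1)) := by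
  induction s with
  | zero =>
    rw [add_zero, add_zero, U_succ, U_succ, U_succ, U_dropAt_of_lt γ x (Nat.lt_succ_self a)]
    simp only [dropAt, lt_irrefl, lt_add_one, if_true, if_false]
    ring
  | succ s ih =>
    rw [← add_assoc, ← add_assoc, U_succ, U_succ]
    simp only [dropAt, if_neg (by omega : ¬ a + 1 + s + 1 < a + 1),
      if_neg (by omega : ¬ a + 1 + s < a + 1)]
    rw [show a + 1 + s + 1 + 1 = a + 2 + s + 1 by omega, show a + 1 + s + 1 = a + 2 + s by omega]
    linarith

lemma U_sub_U_dropAt (γ : ℝ) (x : ℕ → ℝ) {a k : ℕ} (hak : a < k) (hxk : x (k + 1) = 0) :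
    U γ k x - U γ (k - 1) (dropAt x (a + 1)) =
      (x a - x (a + 1)) * (x (a + 1) - x (a + 2)) - γ * x (a + 1) ^ 2 * (1 - x (a + 1)) := by
  obtain ⟨r, rfl⟩ := Nat.exists_eq_add_of_lt hak
  cases r with
  | zero =>
    rw [add_zero, Nat.add_sub_cancel, U_succ, U_dropAt_of_lt γ x (Nat.lt_succ_self a)]
    rw [add_zero] at hxk
    rw [hxk]
    ring
  | succ s =>
    rw [show a + (s + 1) + 1 = a + 2 + s by omega, show a + 2 + s - 1 = a + 1 + s by omega]
    exact U_add_two_sub_U_dropAt γ x a s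

lemma filter_Icc_lt_eq_Icc_card {α : Type*} [LinearOrder α] {x : ℕ → α} {k : ℕ}
    (hx : AntitoneOn x (Set.Icc 1 k)) (t : α) :
    {i ∈ Icc 1 k | t < x i} = Icc 1 #{i ∈ Icc 1 k | t < x i} := by
  induction k with
  | zero => simp
  | succ k ih =>
    by_cases hk : t < x (k + 1)
    · have hall : ∀ i ∈ Icc 1 (k + 1), t < x i := fun i hi =>
        hk.trans_le (hx (by simpa using hi) (by simp) (mem_Icc.mp hi).2)
      rw [filter_true_of_mem hall, Nat.card_Icc, Nat.add_sub_cancel]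
    · rw [← insert_Icc_right_eq_Icc_add_one (by omega), filter_insert, if_neg hk]
      exact ih (hx.mono (Set.Icc_subset_Icc_right (Nat.le_succ k)))

lemma lt_iff_le_card_filter_Icc {α : Type*} [LinearOrder α] {x : ℕ → α} {k : ℕ}
    (hx : AntitoneOn x (Set.Icc 1 k)) (t : α) {i : ℕ} (hi : 1 ≤ i) (hik : i ≤ k) :
    t < x i ↔ i ≤ #{j ∈ Icc 1 k | t < x j} := by
  have hmem := congrArg (i ∈ ·) (filter_Icc_lt_eq_Icc_card hx t)
  simp only [mem_filter, mem_Icc, eq_iff_iff] at hmem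
  tauto

lemma mem_Ioc_of_card_filter_lt_of_le_card_filter {α : Type*} [LinearOrder α] {x : ℕ → α}
    {k : ℕ} (hx : AntitoneOn x (Set.Icc 1 k)) {s t : α} {i : ℕ}
    (hti : #{j ∈ Icc 1 k | t < x j} < i) (his : i ≤ #{j ∈ Icc 1 k | s < x j}) :
    x i ∈ Set.Ioc s t := by
  have hik : i ≤ k := his.trans ((card_filter_le _ _).trans (by simp))
  refine ⟨(lt_iff_le_card_filter_Icc hx s (by omega) hik).2 his, not_lt.1 fun h => ?_⟩
  exact hti.not_ge ((lt_iff_le_card_filter_Icc hx t (by omega) hik).1 h)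

lemma sub_mul_le_sub_of_le_sub_succ {x : ℕ → ℝ} {δ : ℝ} {m n : ℕ} (hmn : m ≤ n)
    (h : ∀ i, m ≤ i → i < n → δ ≤ x i - x (i + 1)) :
    ((n : ℝ) - m) * δ ≤ x m - x n := by
  induction n, hmn using Nat.le_induction with
  | base => simp
  | succ n hmn ih =>
    have hn := h n hmn (Nat.lt_succ_self n)
    have := ih fun i hi hin => h i hi (by omega)
    push_cast
    linarith

lemma sq_mul_one_sub_le_sq_mul_one_sub {a b : ℝ} (ha : 0 ≤ a) (hab : a ≤ b)
    (hb : b ≤ 2 / 3) :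
    a ^ 2 * (1 - a) ≤ b ^ 2 * (1 - b) := by
  nlinarith [mul_nonneg (sub_nonneg.mpr hab) (mul_nonneg ha (sub_nonneg.mpr hb)),
    mul_nonneg (sub_nonneg.mpr hab) (mul_nonneg (ha.trans hab) (sub_nonneg.mpr hb)),
    mul_nonneg (sub_nonneg.mpr hab) (sq_nonneg (b - a))]

section Gaps

variable {γ : ℝ} {x : ℕ → ℝ} {m n : ℕ}

lemma sub_add_one_sub_eq_of_rec {i : ℕ}
    (h : x (i + 2) = 2 * x (i + 1) - x i + γ * (2 * x (i + 1) - 3 * x (i + 1) ^ 2)) :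
    x (i + 1) - x (i + 2) = x i - x (i + 1) + γ * x (i + 1) * (3 * x (i + 1) - 2) := by
  rw [h]
  ring

lemma three_mul_mul_sub_one_lt_one_of_two_thirds_lt (hγ : 0 ≤ γ) (hx0 : x 0 = 1)
    (hx1 : x 1 ≤ 1)
    (hrec : ∀ i, i + 1 < n →
      x (i + 2) = 2 * x (i + 1) - x i + γ * (2 * x (i + 1) - 3 * x (i + 1) ^ 2))
    (hdrop : ∀ i, i + 1 < n →
      γ * x (i + 1) ^ 2 * (1 - x (i + 1)) ≤ (x i - x (i + 1)) * (x (i + 1) - x (i + 2)))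
    (hsteep : ∀ i, 1 ≤ i → i ≤ n → 2 / 3 < x i) :
    3 * γ * ((n : ℝ) - 1) < 1 := by
  rcases lt_or_ge n 2 with hn | hn
  · have : (n : ℝ) ≤ 1 := by exact_mod_cast Nat.le_of_lt_succ hn
    nlinarith
  have hx1' := hsteep 1 le_rfl (by omega)
  have hfirst : γ * x 1 ^ 2 ≤ x 1 - x 2 := by
    have hdrop0 := hdrop 0 (by omega)
    have hrec0 := hrec 0 (by omega)
    rw [hx0] at hdrop0 hrec0
    rcases hx1.lt_or_eq with hlt | heq
    · exact le_of_mul_le_mul_right (by linarith) (sub_pos.mpr hlt)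
    · rw [heq] at hrec0 ⊢
      linarith
  have hmono : MonotoneOn (fun i => x i - x (i + 1)) (Set.Ico 1 n) :=
    monotoneOn_of_le_add_one Set.ordConnected_Ico fun a _ _ ha => by
      have hxa := hsteep (a + 1) (by omega) ha.2.le
      have hgrow : 0 ≤ γ * x (a + 1) * (3 * x (a + 1) - 2) :=
        mul_nonneg (mul_nonneg hγ (by linarith)) (by linarith)
      show x a - x (a + 1) ≤ x (a + 1) - x (a + 2)
      linarith [sub_add_one_sub_eq_of_rec (hrec a ha.2)]
  have hgaps : ∀ i, 1 ≤ i → i < n → γ * x 1 ^ 2 ≤ x i - x (i + 1) := fun i hi hin =>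
    hfirst.trans (hmono ⟨le_rfl, by omega⟩ ⟨hi, hin⟩ hi)
  have htel := sub_mul_le_sub_of_le_sub_succ (by omega) hgaps
  rw [Nat.cast_one] at htel
  have hxn := hsteep n (by omega) le_rfl
  -- `x₁ - 2/3 ≤ x₁² / 3` is `(1 - x₁)(2 - x₁) ≥ 0`
  have hsum : 3 * γ * ((n : ℝ) - 1) * x 1 ^ 2 < 1 * x 1 ^ 2 := by
    nlinarith [mul_nonneg (sub_nonneg.mpr hx1) (by linarith : (0 : ℝ) ≤ 2 - x 1)]
  exact lt_of_mul_lt_mul_right hsum (sq_nonneg _)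

lemma sub_le_div_sqrt_of_mem_Ioc {c : ℝ} (hγ : 0 < γ) (hc0 : 0 < c) (hc : c < 2 / 3)
    (hflat : ∀ i, m ≤ i → i ≤ n → x i ∈ Set.Ioc c (2 / 3))
    (hdec : ∀ i, m ≤ i → i < n → x (i + 1) < x i)
    (hrec : ∀ i, m ≤ i → i < n →
      x (i + 2) = 2 * x (i + 1) - x i + γ * (2 * x (i + 1) - 3 * x (i + 1) ^ 2))
    (hdrop : ∀ i, m ≤ i → i < n →
      γ * x (i + 1) ^ 2 * (1 - x (i + 1)) ≤ (x i - x (i + 1)) * (x (i + 1) - x (i + 2))) :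
    (n : ℝ) - m ≤ (2 / 3 - c) / √(γ * c ^ 2 * (1 - c)) := by
  have hD : 0 < √(γ * c ^ 2 * (1 - c)) :=
    Real.sqrt_pos.mpr (mul_pos (by positivity) (by linarith))
  rcases lt_or_ge n m with hnm | hmn
  · have : (n : ℝ) < m := by exact_mod_cast hnm
    exact (sub_neg.mpr this).le.trans (div_nonneg (by linarith) hD.le)
  have hgap : ∀ i, m ≤ i → i < n → √(γ * c ^ 2 * (1 - c)) ≤ x i - x (i + 1) := by
    intro i hi hin
    obtain ⟨hcx, hx23⟩ := hflat (i + 1) (by omega) hin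
    have hpos : 0 < x i - x (i + 1) := sub_pos.mpr (hdec i hi hin)
    have hshrink : x (i + 1) - x (i + 2) ≤ x i - x (i + 1) := by
      have : γ * x (i + 1) * (3 * x (i + 1) - 2) ≤ 0 :=
        mul_nonpos_of_nonneg_of_nonpos (mul_nonneg hγ.le (by linarith)) (by linarith)
      linarith [sub_add_one_sub_eq_of_rec (hrec i hi hin)]
    rw [Real.sqrt_le_left hpos.le]
    calc γ * c ^ 2 * (1 - c) ≤ γ * x (i + 1) ^ 2 * (1 - x (i + 1)) := by
          rw [mul_assoc, mul_assoc]
          exact mul_le_mul_of_nonneg_left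
            (sq_mul_one_sub_le_sq_mul_one_sub hc0.le hcx.le hx23) hγ.le
      _ ≤ (x i - x (i + 1)) * (x (i + 1) - x (i + 2)) := hdrop i hi hin
      _ ≤ (x i - x (i + 1)) ^ 2 := by
          rw [sq]
          exact mul_le_mul_of_nonneg_left hshrink hpos.le
  have htel := sub_mul_le_sub_of_le_sub_succ hmn hgap
  have hxm := hflat m le_rfl hmn
  have hxn := hflat n hmn le_rfl
  rw [le_div_iff₀ hD]
  linarith [hxm.2, hxn.1]

end Gaps

lemma le_mBound {γ c N : ℝ} {M : ℕ} (hγ : 0 < γ) (hM : 3 * γ * ((M : ℝ) - 1) < 1)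
    (hN : N - (M + 1) ≤ (2 / 3 - c) / √(γ * c ^ 2 * (1 - c))) : N ≤ mBound γ c := by
  unfold mBound
  split_ifs with hγ3
  · have : (M : ℝ) - 1 < 1 / (3 * γ) := by
      rw [lt_div_iff₀ (by positivity)]
      linarith
    linarith
  · have hM1 : (M : ℝ) ≤ 1 := by
      have : M < 2 := by exact_mod_cast (show (M : ℝ) < 2 by nlinarith)
      exact_mod_cast Nat.le_of_lt_succ this
    linarith

theorem stmt_10_general (γ : ℝ) (hγ : 0 < γ) (c : ℝ) (hc0 : 0 < c) (hc : c < 2 / 3)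
    (k : ℕ) (x : ℕ → ℝ)
    (hx0 : x 0 = 1) (hxk1 : x (k + 1) = 0) (hx1 : x 1 ≤ 1)
    (hdec : ∀ i, 1 ≤ i → i < k → x (i + 1) < x i)
    (hrec : ∀ i, 1 ≤ i → i ≤ k →
      x (i + 1) = 2 * x i - x (i - 1) + γ * (2 * x i - 3 * (x i) ^ 2))
    (hdrop : ∀ i, 1 ≤ i → i ≤ k → U γ (k - 1) (dropAt x i) ≤ U γ k x) :
    ((((Finset.Icc 1 k).filter fun i => c < x i).card : ℝ)) ≤ mBound γ c := by
  have hrec' : ∀ i, i < k →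
      x (i + 2) = 2 * x (i + 1) - x i + γ * (2 * x (i + 1) - 3 * x (i + 1) ^ 2) :=
    fun i hi => hrec (i + 1) (by omega) hi
  have hdrop' : ∀ i, i < k →
      γ * x (i + 1) ^ 2 * (1 - x (i + 1)) ≤ (x i - x (i + 1)) * (x (i + 1) - x (i + 2)) :=
    fun i hi => by linarith [U_sub_U_dropAt γ x hi hxk1, hdrop (i + 1) (by omega) hi]
  have hanti : AntitoneOn x (Set.Icc 1 k) :=
    antitoneOn_of_add_one_le Set.ordConnected_Icc fun a _ ha ha1 => (hdec a ha.1 ha1.2).le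
  set N := #{i ∈ Icc 1 k | c < x i}
  set M := #{i ∈ Icc 1 k | 2 / 3 < x i}
  have hNk : N ≤ k := (card_filter_le _ _).trans (by simp)
  have hMk : M ≤ k := (card_filter_le _ _).trans (by simp)
  have hsteep : 3 * γ * ((M : ℝ) - 1) < 1 :=
    three_mul_mul_sub_one_lt_one_of_two_thirds_lt hγ.le hx0 hx1
      (fun i hi => hrec' i (by omega)) (fun i hi => hdrop' i (by omega))
      (fun i hi hiM => (lt_iff_le_card_filter_Icc hanti _ hi (hiM.trans hMk)).2 hiM)
  have hflat : (N : ℝ) - (M + 1 : ℕ) ≤ (2 / 3 - c) / √(γ * c ^ 2 * (1 - c)) :=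
    sub_le_div_sqrt_of_mem_Ioc hγ hc0 hc
      (fun i hi hiN => mem_Ioc_of_card_filter_lt_of_le_card_filter hanti hi hiN)
      (fun i hi hiN => hdec i (by omega) (by omega)) (fun i _ hiN => hrec' i (by omega))
      (fun i _ hiN => hdrop' i (by omega))
  exact le_mBound hγ hsteep (by exact_mod_cast hflat)

/-- Let γ > 0 and 0 < c < 2/3. If the k-portfolio
`1 ≥ x_1 > ⋯ > x_k > 0` satisfies the FOC recurrence (with `x_0 = 1`, `x_{k+1} = 0`)
and dropping any single school does not increase `U_γ`, then the number of indices
with `x_i > c` is at most `m(γ,c)`. -/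
theorem stmt_10 (γ : ℝ) (hγ : 0 < γ) (c : ℝ) (hc0 : 0 < c) (hc : c < 2 / 3)
    (k : ℕ) (x : ℕ → ℝ)
    (hx0 : x 0 = 1) (hxk1 : x (k + 1) = 0) (hx1 : x 1 ≤ 1)
    (hdec : ∀ i, 1 ≤ i → i < k → x (i + 1) < x i) (hpos : 0 < x k)
    (hrec : ∀ i, 1 ≤ i → i ≤ k →
      x (i + 1) = 2 * x i - x (i - 1) + γ * (2 * x i - 3 * (x i) ^ 2))
    (hdrop : ∀ i, 1 ≤ i → i ≤ k → U γ (k - 1) (dropAt x i) ≤ U γ k x) :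
    ((((Finset.Icc 1 k).filter fun i => c < x i).card : ℝ)) ≤ mBound γ c :=
  stmt_10_general γ hγ c hc0 hc k x hx0 hxk1 hx1 hdec hrec hdrop
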